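/- Let {ν} = {0 = ν^{(0)} ⊆ ν^{(1)} ⊆ ⋯ ⊆ ν^{(m)} ⊆ ν^{(m+1)} = λ} be a chain of partitions and set α_λ({ν};q) := ∏_{i=0}^{m} α_{ν^{(i+1)}}(ν^{(i)};q), so that for every prime p, α_λ({ν};p) is the number of chains of subgroups {e} ⊆ H^{(1)} ⊆ ⋯ ⊆ H^{(m)} ⊆ G in a finite abelian p-group G of type λ with H^{(i)} of type ν^{(i)} for all i. Then, as an identity of rational functions in q, q^{n(λ)} α_λ({ν}; q^{−1}) = q^{c(ν)} ∏_{i=1}^{m} ∏_{j≥1} [ (ν^{(i+1)})'_j − (ν^{(i)})'_{j+1} choose (ν^{(i)})'_j − (ν^{(i)})'_{j+1} ]_q, where c(ν) = Σ_{i=0}^{m} Σ_{j≥1} binom( (ν^{(i+1)})'_j − (ν^{(i)})'_j, 2 ). -/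

import Mathlib

namespace KHL

/-- `conjC l j` is the `j`-th part (1-based) of the conjugate of the partition `l`. -/
def conjC (l : List ℕ) (j : ℕ) : ℕ := (l.filter (fun x => j ≤ x)).length

/-- `nstat λ = n(λ) = Σ_{i≥1} (i-1)·λ_i`. -/
def nstat (l : List ℕ) : ℕ := ∑ i ∈ Finset.range l.length, i * l.getD i 0

/-- The Gaussian binomial coefficient `[n choose k]_q` as a polynomial in `ℤ[q]`. -/
noncomputable def qbinom : ℕ → ℕ → Polynomial ℤ
  | _, 0 => 1
  | 0, _ + 1 => 0
  | n + 1, k + 1 => qbinom n k + Polynomial.X ^ (k + 1) * qbinom n (k + 1)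

/-- The finset of all partitions of `n`, as weakly decreasing lists of positive integers. -/
noncomputable def partitionsOf (n : ℕ) : Finset (List ℕ) :=
  Finset.image (fun p : Nat.Partition n => (Multiset.sort p.parts (· ≤ ·)).reverse) Finset.univ

/-- The conjugate partition, as a list. -/
def conjList (l : List ℕ) : List ℕ := (List.range (l.headD 0)).map fun j => conjC l (j + 1)

/-- A semistandard Young tableau of shape `sh` (a partition, as a list of row lengths);
entries are positive inside the diagram (cell `(i,j)` with `j < sh_i`), `0` outside;
rows weakly increase, columns strictly increase. -/
structure SSYT (sh : List ℕ) where
  entry : ℕ → ℕ → ℕ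
  zero_outside : ∀ i j, sh.getD i 0 ≤ j → entry i j = 0
  pos_inside : ∀ i j, j < sh.getD i 0 → 1 ≤ entry i j
  row_weak : ∀ i j, j + 1 < sh.getD i 0 → entry i j ≤ entry i (j + 1)
  col_strict : ∀ i j, j < sh.getD (i + 1) 0 → entry i j < entry (i + 1) j

/-- The filling `f` of shape `sh` has weight `mu`: the entry `k+1` occurs `mu_{k+1}` times. -/
def WtIs (sh : List ℕ) (f : ℕ → ℕ → ℕ) (mu : List ℕ) : Prop :=
  ∀ k, {p : ℕ × ℕ | p.2 < sh.getD p.1 0 ∧ f p.1 p.2 = k + 1}.ncard = mu.getD k 0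

/-- The Kostka number `K_{ημ}`: the number of SSYT of shape `η` and weight `μ`. -/
noncomputable def kostka (eta mu : List ℕ) : ℕ :=
  Nat.card {T : SSYT eta // WtIs eta T.entry mu}

/- ### The Lascoux–Schützenberger charge -/

/-- charge of a standard word, given the positions of the letters `1, 2, …` in order:
letter 1 has index 0, and the index of `r+1` equals that of `r`, plus one if `r+1`
is located to the right of `r`; the charge is the sum of the indices. -/
def chargeStdAux : ℕ → ℕ → List ℕ → ℕ
  | _, _, [] => 0
  | prev, ind, p :: rest =>
    let ind' := if prev < p then ind + 1 else ind
    ind' + chargeStdAux p ind' rest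

def chargeStd : List ℕ → ℕ
  | [] => 0
  | p :: rest => chargeStdAux p 0 rest

/-- positions of a word of length `n`, read leftwards starting just left of `s`, cyclically. -/
def cycOrder (n s : ℕ) : List ℕ := (List.range s).reverse ++ (List.range' s (n - s)).reverse

/-- first position, leftwards-cyclically from `s`, carrying the letter `l`. -/
def findCyc (w : List ℕ) (l s : ℕ) : Option ℕ :=
  (cycOrder w.length s).find? fun i => w.getD i 0 = l

def extractAux (w : List ℕ) : ℕ → ℕ → ℕ → List ℕ
  | 0, _, _ => []
  | fuel + 1, s, l =>
    match findCyc w l s with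
    | none => []
    | some p => p :: extractAux w fuel p (l + 1)

/-- positions of the extracted standard subword: the rightmost `1`, then cyclically
leftwards the first `2`, then the first `3`, etc. -/
def extract (w : List ℕ) : List ℕ :=
  if 1 ∈ w then
    (w.length - 1 - (w.reverse.findIdx (· = 1))) ::
      extractAux w (w.foldr max 0) (w.length - 1 - (w.reverse.findIdx (· = 1))) 2
  else []

def removeIdx (w : List ℕ) (I : List ℕ) : List ℕ :=
  ((w.zipIdx.map Prod.swap).filter fun p => p.1 ∉ I).map Prod.snd

def chargeAux : ℕ → List ℕ → ℕ
  | 0, _ => 0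
  | fuel + 1, w =>
    if (extract w).isEmpty then 0
    else chargeStd (extract w) + chargeAux fuel (removeIdx w (extract w))

/-- The Lascoux–Schützenberger charge of a word (of partition weight): the sum of the
charges of the successively extracted standard subwords. -/
def charge (w : List ℕ) : ℕ := chargeAux w.length w

/-- The reading word of a tableau: rows read left to right, starting from the bottom row. -/
def readingWord {sh : List ℕ} (T : SSYT sh) : List ℕ :=
  ((List.range sh.length).reverse.map fun i =>
    (List.range (sh.getD i 0)).map fun j => T.entry i j).flatten

/-- The Kostka–Foulkes polynomial `K_{ηλ}(t) = Σ_T t^{c(T)}`, summed over all SSYT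
of shape `η` and weight `λ`, where `c` is the Lascoux–Schützenberger charge. -/
noncomputable def kostkaFoulkes (eta lam : List ℕ) : Polynomial ℤ :=
  ∑ᶠ T : {T : SSYT eta // WtIs eta T.entry lam}, Polynomial.X ^ charge (readingWord T.1)

/-- `𝒫_{λμ}(t) = Σ_η K_{ημ} K_{ηλ}(t)`, summed over all partitions `η` of `|λ|`. -/
noncomputable def Pcal (lam mu : List ℕ) : Polynomial ℤ :=
  ∑ eta ∈ partitionsOf lam.sum, (kostka eta mu : Polynomial ℤ) * kostkaFoulkes eta lam

/-- `ℛ_{λμ}(t) = Σ_η K_{ημ} K_{η'λ}(t)`, summed over all partitions `η` of `|λ|`. -/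
noncomputable def Rcal (lam mu : List ℕ) : Polynomial ℤ :=
  ∑ eta ∈ partitionsOf lam.sum,
    (kostka eta mu : Polynomial ℤ) * kostkaFoulkes (conjList eta) lam


/-- Delsarte's polynomial `α_λ(ν;q)`: for a prime `p`, `α_λ(ν;p)` is the number of
subgroups of type `ν` in a finite abelian `p`-group of type `λ`. -/
noncomputable def alphaPoly (lam nu : List ℕ) : Polynomial ℤ :=
  ∏ j ∈ Finset.Icc 1 (lam.headD 0),
    Polynomial.X ^ (conjC nu (j + 1) * (conjC lam j - conjC nu j)) *
      qbinom (conjC lam j - conjC nu (j + 1)) (conjC nu j - conjC nu (j + 1))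

/-- `α_λ({ν};q) := ∏_{i=0}^{m} α_{ν^{(i+1)}}(ν^{(i)};q)` for a chain
`0 = ν⁰ ⊆ ν¹ ⊆ ⋯ ⊆ ν^{m+1} = λ`; for a prime `p` it counts chains of subgroups
`{e} ⊆ H¹ ⊆ ⋯ ⊆ H^m ⊆ G` in a finite abelian `p`-group `G` of type `λ` with
`H^i` of type `ν^{(i)}`. -/
noncomputable def alphaChainPoly (m : ℕ) (nu : ℕ → List ℕ) : Polynomial ℤ :=
  ∏ i ∈ Finset.range (m + 1), alphaPoly (nu (i + 1)) (nu i)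

/-!
Write `n(λ) = Σ_j binom(λ'_j, 2)` and split each `binom(λ'_j, 2)` along the chain of conjugates
`0 = (ν⁰)'_j ≤ (ν¹)'_j ≤ ⋯ ≤ (ν^{m+1})'_j = λ'_j` as `Σ_i binom(a - b, 2) + b (a - b)` with
`a = (ν^{i+1})'_j`, `b = (ν^i)'_j`. The `binom` pieces give `q^{c(ν)}`. With `c = (ν^i)'_{j+1}`,
the piece `q^{b(a-b)}` times the factor `q^{-c(a-b)} [a-c choose b-c]_{q⁻¹}` of `α(q⁻¹)` is
`q^{(b-c)(a-b)} [a-c choose b-c]_{q⁻¹} = [a-c choose b-c]_q` by reciprocity of Gaussian binomials.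
The factors with `i = 0` are trivial since `ν⁰ = 0`.
-/

open Finset Polynomial

lemma qbinom_zero_right (n : ℕ) : qbinom n 0 = 1 := by cases n <;> rfl

lemma qbinom_succ_succ (n k : ℕ) :
    qbinom (n + 1) (k + 1) = qbinom n k + X ^ (k + 1) * qbinom n (k + 1) := rfl

lemma qbinom_eq_zero_of_lt : ∀ {n k : ℕ}, n < k → qbinom n k = 0
  | 0, _ + 1, _ => rfl
  | n + 1, k + 1, h => by
    rw [qbinom_succ_succ, qbinom_eq_zero_of_lt (by omega), qbinom_eq_zero_of_lt (by omega)]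
    ring

-- The truncated `n - k` is harmless: for `n < k` both sides vanish.
lemma qbinom_succ_succ' (n k : ℕ) :
    qbinom (n + 1) (k + 1) = X ^ (n - k) * qbinom n k + qbinom n (k + 1) := by
  induction n generalizing k with
  | zero =>
    cases k with
    | zero => simp [qbinom_succ_succ 0 0, qbinom_zero_right, qbinom_eq_zero_of_lt]
    | succ k => simp [qbinom_eq_zero_of_lt]
  | succ n ih =>
    cases k with
    | zero =>
      conv_lhs => rw [qbinom_succ_succ (n + 1) 0, ih 0]
      conv_rhs => rw [qbinom_succ_succ n 0]
      simp only [qbinom_zero_right, Nat.sub_zero]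
      ring
    | succ k =>
      conv_lhs => rw [qbinom_succ_succ (n + 1) (k + 1), ih k, ih (k + 1)]
      conv_rhs => rw [qbinom_succ_succ n k, qbinom_succ_succ n (k + 1), Nat.add_sub_add_right]
      rcases lt_or_ge k n with hkn | hkn
      · obtain ⟨d, rfl⟩ := Nat.exists_eq_add_of_lt hkn
        rw [show k + d + 1 - k = d + 1 by omega, show k + d + 1 - (k + 1) = d by omega]
        ring
      · rw [qbinom_eq_zero_of_lt (n := n) (k := k + 1) (by omega)]
        ring

lemma pow_mul_aeval_inv_qbinom {K : Type*} [Field K] [Algebra ℤ K] {x : K} (hx : x ≠ 0)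
    (n k : ℕ) :
    x ^ (k * (n - k)) * aeval x⁻¹ (qbinom n k) = aeval x (qbinom n k) := by
  induction n generalizing k with
  | zero =>
    cases k with
    | zero => simp [qbinom_zero_right]
    | succ k => simp [qbinom_eq_zero_of_lt]
  | succ n ih =>
    cases k with
    | zero => simp [qbinom_zero_right]
    | succ k =>
      conv_rhs => rw [qbinom_succ_succ' n k]
      rw [qbinom_succ_succ, Nat.add_sub_add_right]
      simp only [map_add, map_mul, map_pow, aeval_X]
      rcases lt_or_ge k n with hkn | hkn
      · obtain ⟨d, rfl⟩ := Nat.exists_eq_add_of_lt hkn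
        rw [← ih k, ← ih (k + 1), show k + d + 1 - k = d + 1 by omega,
          show k + d + 1 - (k + 1) = d by omega, inv_pow]
        field_simp
        ring
      · rw [qbinom_eq_zero_of_lt (Nat.lt_succ_of_le hkn), ← ih k, Nat.sub_eq_zero_of_le hkn]
        simp

@[simp]
lemma conjC_nil (j : ℕ) : conjC [] j = 0 := rfl

lemma conjC_antitone (l : List ℕ) : Antitone (conjC l) := fun i j hij => by
  simp only [conjC, ← List.countP_eq_length_filter]
  exact List.countP_mono_left fun x _ hx => by simp_all; omega

lemma getD_le_headD {l : List ℕ} (hl : l.Pairwise (· ≥ ·)) (k : ℕ) :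
    l.getD k 0 ≤ l.headD 0 := by
  cases l with
  | nil => simp
  | cons x t =>
    cases k with
    | zero => simp
    | succ k =>
      rw [List.getD_cons_succ]
      by_cases hk : k < t.length
      · rw [List.getD_eq_getElem _ _ hk]
        exact (List.pairwise_cons.1 hl).1 _ (List.getElem_mem hk)
      · rw [List.getD_eq_default _ _ (by omega)]
        exact Nat.zero_le _

lemma conjC_eq_zero_of_headD_lt {l : List ℕ} (hl : l.Pairwise (· ≥ ·)) {j : ℕ}
    (hj : l.headD 0 < j) : conjC l j = 0 := by
  simp only [conjC, List.length_eq_zero_iff, List.filter_eq_nil_iff, decide_eq_true_eq, not_le]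
  intro v hv
  obtain ⟨k, hk, rfl⟩ := List.getElem_of_mem hv
  have := getD_le_headD hl k
  rw [List.getD_eq_getElem _ _ hk] at this
  omega

-- Parts of `l` are indexed from `0`, those of its conjugate from `1`.
lemma lt_conjC_iff {l : List ℕ} (hl : l.Pairwise (· ≥ ·)) {j : ℕ} (hj : 1 ≤ j) (k : ℕ) :
    k < conjC l j ↔ j ≤ l.getD k 0 := by
  induction l generalizing k with
  | nil => simp [conjC]; omega
  | cons x t ih =>
    by_cases hjx : j ≤ x
    · have hcons : conjC (x :: t) j = conjC t j + 1 := by simp [conjC, hjx]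
      cases k with
      | zero => simp [hcons, hjx]
      | succ k => rw [hcons, List.getD_cons_succ, ← ih (List.pairwise_cons.1 hl).2]; omega
    · have hhead : (x :: t).headD 0 < j := by simpa using hjx
      have := getD_le_headD hl k
      rw [conjC_eq_zero_of_headD_lt hl hhead]
      simp only [List.headD_cons] at this hhead
      omega

lemma conjC_le_conjC_of_getD_le {p q : List ℕ} (hp : p.Pairwise (· ≥ ·)) (hq : q.Pairwise (· ≥ ·))
    (hpq : ∀ k, p.getD k 0 ≤ q.getD k 0) {j : ℕ} (hj : 1 ≤ j) : conjC p j ≤ conjC q j := by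
  by_contra! h
  have := (lt_conjC_iff hp hj _).1 h
  exact (lt_conjC_iff hq hj _).2 (this.trans (hpq _)) |>.false

lemma nstat_eq_sum_choose_conjC {l : List ℕ} (hl : l.Pairwise (· ≥ ·)) :
    nstat l = ∑ j ∈ Icc 1 (l.headD 0), (conjC l j).choose 2 := by
  have hrow : ∀ k,
      k * l.getD k 0 = ∑ j ∈ Icc 1 (l.headD 0), if k < conjC l j then k else 0 := by
    intro k
    rw [← sum_filter, sum_const, smul_eq_mul, mul_comm]
    congr 1
    rw [show {j ∈ Icc 1 (l.headD 0) | k < conjC l j} = Icc 1 (l.getD k 0) by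
      ext j
      simp only [mem_filter, mem_Icc]
      have := getD_le_headD hl k
      constructor
      · rintro ⟨hj, hk⟩; exact ⟨hj.1, (lt_conjC_iff hl hj.1 k).1 hk⟩
      · rintro hj; exact ⟨⟨hj.1, hj.2.trans this⟩, (lt_conjC_iff hl hj.1 k).2 hj.2⟩]
    simp
  have hcol : ∀ j,
      ∑ k ∈ range l.length, (if k < conjC l j then k else 0) = (conjC l j).choose 2 := by
    intro j
    rw [← sum_filter, show {k ∈ range l.length | k < conjC l j} = range (conjC l j) by
      ext k
      simp only [mem_filter, mem_range]
      have : conjC l j ≤ l.length := List.length_filter_le _ _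
      omega]
    rw [sum_range_id, Nat.choose_two_right]
  simp only [nstat, hrow]
  rw [sum_comm]
  exact sum_congr rfl fun j _ => hcol j

lemma choose_two_add (s d : ℕ) : (s + d).choose 2 = s.choose 2 + s * d + d.choose 2 := by
  have : ((s + d).choose 2 : ℚ) = s.choose 2 + s * d + d.choose 2 := by
    push_cast [Nat.cast_choose_two]
    ring
  exact_mod_cast this

lemma choose_two_eq_sum_of_le_succ {g : ℕ → ℕ} {n : ℕ} (h0 : g 0 = 0)
    (hg : ∀ i < n, g i ≤ g (i + 1)) :
    (g n).choose 2 = ∑ i ∈ range n, ((g (i + 1) - g i).choose 2 + g i * (g (i + 1) - g i)) := by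
  induction n with
  | zero => simp [h0]
  | succ n ih =>
    rw [sum_range_succ, ← ih fun i hi => hg i (by omega)]
    obtain ⟨d, hd⟩ := Nat.exists_eq_add_of_le (hg n n.lt_succ_self)
    rw [hd, Nat.add_sub_cancel_left, choose_two_add]
    ring

lemma alphaPoly_eq_prod_Icc {κ μ : List ℕ} (hκ : κ.Pairwise (· ≥ ·))
    (hμκ : ∀ j, 1 ≤ j → conjC μ j ≤ conjC κ j) {H : ℕ} (hH : κ.headD 0 ≤ H) :
    alphaPoly κ μ = ∏ j ∈ Icc 1 H,
      X ^ (conjC μ (j + 1) * (conjC κ j - conjC μ j)) *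
        qbinom (conjC κ j - conjC μ (j + 1)) (conjC μ j - conjC μ (j + 1)) := by
  refine prod_subset (Icc_subset_Icc le_rfl hH) fun j hj hj' => ?_
  simp only [mem_Icc, not_and, not_le] at hj hj'
  have hκj : conjC κ j = 0 := conjC_eq_zero_of_headD_lt hκ (hj' hj.1)
  have hμj : conjC μ j = 0 := Nat.eq_zero_of_le_zero (hκj ▸ hμκ j hj.1)
  have hμj' : conjC μ (j + 1) = 0 :=
    Nat.eq_zero_of_le_zero (hμj ▸ conjC_antitone μ j.le_succ)
  simp [hκj, hμj, hμj', qbinom_zero_right]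

lemma alphaPoly_nil (κ : List ℕ) : alphaPoly κ [] = 1 :=
  prod_eq_one fun j _ => by simp [qbinom_zero_right]

lemma pow_mul_aeval_inv_alphaPoly {K : Type*} [Field K] [Algebra ℤ K] {x : K} (hx : x ≠ 0)
    {κ μ : List ℕ} (hκ : κ.Pairwise (· ≥ ·)) (hμκ : ∀ j, 1 ≤ j → conjC μ j ≤ conjC κ j) {H : ℕ}
    (hH : κ.headD 0 ≤ H) :
    x ^ (∑ j ∈ Icc 1 H, conjC μ j * (conjC κ j - conjC μ j)) * aeval x⁻¹ (alphaPoly κ μ) =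
      ∏ j ∈ Icc 1 H,
        aeval x (qbinom (conjC κ j - conjC μ (j + 1)) (conjC μ j - conjC μ (j + 1))) := by
  rw [alphaPoly_eq_prod_Icc hκ hμκ hH, ← prod_pow_eq_pow_sum, map_prod, ← prod_mul_distrib]
  refine prod_congr rfl fun j hj => ?_
  have hμ : conjC μ j ≤ conjC κ j := hμκ j (mem_Icc.1 hj).1
  have hμ' : conjC μ (j + 1) ≤ conjC μ j := conjC_antitone μ j.le_succ
  set a := conjC κ j
  set b := conjC μ j
  set c := conjC μ (j + 1)
  rw [← pow_mul_aeval_inv_qbinom hx, map_mul, map_pow, aeval_X, inv_pow,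
    show b * (a - b) = (b - c) * (a - c - (b - c)) + c * (a - b) by
      rw [show a - c - (b - c) = a - b by omega, ← Nat.add_mul, Nat.sub_add_cancel hμ'],
    pow_add]
  field_simp

/-- For a chain of partitions `{ν} = {0 = ν⁰ ⊆ ν¹ ⊆ ⋯ ⊆ ν^{m+1} = λ}`,
as an identity of rational functions in `q`,
`q^{n(λ)} α_λ({ν}; q⁻¹) = q^{c(ν)} ∏_{i=1}^{m} ∏_{j≥1} [(ν^{(i+1)})'_j − (ν^{(i)})'_{j+1}
choose (ν^{(i)})'_j − (ν^{(i)})'_{j+1}]_q`, where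
`c(ν) = Σ_{i=0}^{m} Σ_{j≥1} C((ν^{(i+1)})'_j − (ν^{(i)})'_j, 2)`. -/
theorem stmt4 (m : ℕ) (lam : List ℕ) (nu : ℕ → List ℕ)
    (hpart : ∀ k ≤ m + 1, (nu k).Pairwise (· ≥ ·) ∧ ∀ x ∈ nu k, 0 < x)
    (h0 : nu 0 = []) (htop : nu (m + 1) = lam)
    (hchain : ∀ k ≤ m, ∀ i, (nu k).getD i 0 ≤ (nu (k + 1)).getD i 0) :
    (RatFunc.X : RatFunc ℚ) ^ nstat lam *
        Polynomial.aeval ((RatFunc.X : RatFunc ℚ)⁻¹) (alphaChainPoly m nu) =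
      (RatFunc.X : RatFunc ℚ) ^
          (∑ i ∈ Finset.range (m + 1), ∑ j ∈ Finset.Icc 1 (lam.headD 0),
            Nat.choose (conjC (nu (i + 1)) j - conjC (nu i) j) 2) *
        ∏ i ∈ Finset.Icc 1 m, ∏ j ∈ Finset.Icc 1 (lam.headD 0),
          Polynomial.aeval (RatFunc.X : RatFunc ℚ)
            (qbinom (conjC (nu (i + 1)) j - conjC (nu i) (j + 1))
              (conjC (nu i) j - conjC (nu i) (j + 1))) := by
  have hsorted : ∀ i ≤ m + 1, (nu i).Pairwise (· ≥ ·) := fun i hi => (hpart i hi).1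
  have hlam : lam.Pairwise (· ≥ ·) := htop ▸ hsorted (m + 1) le_rfl
  have hconj : ∀ i ≤ m, ∀ j, 1 ≤ j → conjC (nu i) j ≤ conjC (nu (i + 1)) j := fun i hi _ =>
    conjC_le_conjC_of_getD_le (hsorted i (by omega)) (hsorted (i + 1) (by omega)) (hchain i hi)
  have hhead : ∀ i ≤ m + 1, (nu i).headD 0 ≤ lam.headD 0 := by
    have hmono : MonotoneOn (fun i => (nu i).getD 0 0) (Set.Iic (m + 1)) :=
      monotoneOn_of_le_succ Set.ordConnected_Iic fun i _ _ hi =>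
        hchain i (Nat.lt_succ_iff.1 (Order.succ_le_iff.1 hi)) 0
    intro i hi
    simpa only [List.headD_eq_getD, htop] using hmono hi (Set.mem_Iic.2 le_rfl) hi
  have hnstat : nstat lam =
      (∑ i ∈ range (m + 1), ∑ j ∈ Icc 1 (lam.headD 0),
        (conjC (nu (i + 1)) j - conjC (nu i) j).choose 2) +
      ∑ i ∈ range (m + 1), ∑ j ∈ Icc 1 (lam.headD 0),
        conjC (nu i) j * (conjC (nu (i + 1)) j - conjC (nu i) j) := by
    simp only [nstat_eq_sum_choose_conjC hlam, ← sum_add_distrib]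
    rw [sum_comm]
    refine sum_congr rfl fun j hj => ?_
    rw [← htop]
    exact choose_two_eq_sum_of_le_succ (g := fun i => conjC (nu i) j) (by simp [h0])
      fun i hi => hconj i (by omega) j (mem_Icc.1 hj).1
  rw [hnstat, pow_add, mul_assoc]
  congr 1
  rw [alphaChainPoly, map_prod, ← prod_pow_eq_pow_sum, ← prod_mul_distrib, range_eq_Ico,
    prod_eq_prod_Ico_succ_bot (by omega)]
  simp only [h0, conjC_nil, zero_mul, sum_const_zero, pow_zero, alphaPoly_nil, map_one, one_mul,
    zero_add, Ico_add_one_right_eq_Icc]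
  refine prod_congr rfl fun i hi => ?_
  have him : i ≤ m := (mem_Icc.1 hi).2
  exact pow_mul_aeval_inv_alphaPoly (RatFunc.X_ne_zero (K := ℚ)) (hsorted (i + 1) (by omega))
    (hconj i him) (hhead (i + 1) (by omega))

end KHL
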